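/- Let h be the pseudo-Riemannian metric on M × M̄ given in product coordinates by the block matrix [[0, b],[bᵀ, 0]] with b = −D_x D_{x̄} c, and let T be the cost exponential of a locally c-convex potential u (so that w = D²u + D²_x c(x,T(x)) is positive definite). Then the pullback of h under the graph embedding x ↦ (x, T(x)) equals w: (Id × T)* h = w_{ij} dx^i dx^j; in particular the graph is spacelike for h. -/

import Mathlib

/-!
STATEMENT 17: The pullback of the Kim–McCann pseudo-metric
`h = [[0, b],[bᵀ, 0]]` (`b = −D_x D_{x̄} c`, blocks read as the symmetric tensor
`b_{i s̄} dx^i dx̄^{s̄}`) under the graph embedding `x ↦ (x, T x)` of the cost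
exponential `T` of a locally `c`-convex potential `u` equals
`w = D²u + D²_x c(x, T x)`; in particular the graph is spacelike for `h`.
-/

noncomputable section

abbrev ee {n : ℕ} (i : Fin n) : Fin n → ℝ := Pi.single i 1

def pd {n : ℕ} (i : Fin n) (f : (Fin n → ℝ) → ℝ) (x : Fin n → ℝ) : ℝ :=
  fderiv ℝ f x (ee i)

def cI {n : ℕ} (c : (Fin n → ℝ) → (Fin n → ℝ) → ℝ) (x xbar : Fin n → ℝ) (i : Fin n) : ℝ :=
  pd i (fun y => c y xbar) x

/-- `b_{i s̄}(x, x̄) = −c_{i s̄}(x, x̄)`. -/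
def bMat {n : ℕ} (c : (Fin n → ℝ) → (Fin n → ℝ) → ℝ)
    (x xbar : Fin n → ℝ) : Matrix (Fin n) (Fin n) ℝ :=
  Matrix.of fun i s => -(fderiv ℝ (fun ybar => cI c x ybar i) xbar (ee s))

/-- `w_{ij}(x) = u_{ij}(x) + c_{ij}(x, T x)`. -/
def wMat {n : ℕ} (u : (Fin n → ℝ) → ℝ) (c : (Fin n → ℝ) → (Fin n → ℝ) → ℝ)
    (T : (Fin n → ℝ) → (Fin n → ℝ)) (x : Fin n → ℝ) : Matrix (Fin n) (Fin n) ℝ :=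
  Matrix.of fun i j => pd j (fun y => pd i u y) x + pd j (fun y => cI c y (T x) i) x

/-- The Kim–McCann pseudo-metric `h` evaluated on two tangent vectors of the
product (the block matrix `[[0,b],[bᵀ,0]]` read as a symmetric 2-tensor). -/
def hKM {n : ℕ} (c : (Fin n → ℝ) → (Fin n → ℝ) → ℝ)
    (y : (Fin n → ℝ) × (Fin n → ℝ)) (P Q : (Fin n → ℝ) × (Fin n → ℝ)) : ℝ :=
  (1 / 2) * ∑ i, ∑ s, bMat c y.1 y.2 i s * (P.1 i * Q.2 s + Q.1 i * P.2 s)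

/-! ### Auxiliary material -/

lemma sum_single {n : ℕ} (q : Fin n → ℝ) : q = ∑ s, q s • ee s := by
  funext t
  simp [ee, Pi.single_apply, Finset.sum_ite_eq]

lemma clm_sum_eval {n : ℕ} (Ψ : (Fin n → ℝ) →L[ℝ] ℝ) (q : Fin n → ℝ) :
    Ψ q = ∑ s, q s * Ψ (ee s) := by
  conv_lhs => rw [sum_single q]
  rw [map_sum]
  simp [smul_eq_mul]

lemma pd_comm {n : ℕ} {f : (Fin n → ℝ) → ℝ} (hf : ContDiff ℝ (⊤ : ℕ∞) f) (x : Fin n → ℝ)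
    (i j : Fin n) : pd j (fun y => pd i f y) x = pd i (fun y => pd j f y) x := by
  have hf' : ∀ y, HasFDerivAt f (fderiv ℝ f y) y :=
    fun y => (hf.differentiable (by simp) y).hasFDerivAt
  have hf'' : HasFDerivAt (fderiv ℝ f) (fderiv ℝ (fderiv ℝ f) x) x :=
    ((hf.fderiv_right (m := (⊤ : ℕ∞)) (by simp)).differentiable (by simp) x).hasFDerivAt
  have key : ∀ v w : Fin n → ℝ,
      fderiv ℝ (fun y => fderiv ℝ f y v) x w = fderiv ℝ (fderiv ℝ f) x w v := by
    intro v w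
    have h := ((ContinuousLinearMap.apply ℝ ℝ v).hasFDerivAt.comp x hf'').fderiv
    have e : (fun y => fderiv ℝ f y v) = (ContinuousLinearMap.apply ℝ ℝ v) ∘ (fderiv ℝ f) := rfl
    rw [e, h]; rfl
  show fderiv ℝ (fun y => fderiv ℝ f y (ee i)) x (ee j)
      = fderiv ℝ (fun y => fderiv ℝ f y (ee j)) x (ee i)
  rw [key, key]
  exact second_derivative_symmetric hf' hf'' _ _

lemma slice_left {n : ℕ} {F : (Fin n → ℝ) × (Fin n → ℝ) → ℝ} {a b : Fin n → ℝ}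
    (hF : DifferentiableAt ℝ F (a, b)) :
    fderiv ℝ (fun y => F (y, b)) a
      = (fderiv ℝ F (a, b)).comp (ContinuousLinearMap.inl ℝ (Fin n → ℝ) (Fin n → ℝ)) := by
  have hg : HasFDerivAt (fun y : Fin n → ℝ => (y, b))
      (ContinuousLinearMap.inl ℝ (Fin n → ℝ) (Fin n → ℝ)) a :=
    (hasFDerivAt_id a).prodMk (hasFDerivAt_const b a)
  exact (hF.hasFDerivAt.comp a hg).fderiv

lemma slice_right {n : ℕ} {F : (Fin n → ℝ) × (Fin n → ℝ) → ℝ} {a b : Fin n → ℝ}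
    (hF : DifferentiableAt ℝ F (a, b)) :
    fderiv ℝ (fun z => F (a, z)) b
      = (fderiv ℝ F (a, b)).comp (ContinuousLinearMap.inr ℝ (Fin n → ℝ) (Fin n → ℝ)) := by
  have hg : HasFDerivAt (fun z : Fin n → ℝ => (a, z))
      (ContinuousLinearMap.inr ℝ (Fin n → ℝ) (Fin n → ℝ)) b :=
    (hasFDerivAt_const a b).prodMk (hasFDerivAt_id b)
  exact (hF.hasFDerivAt.comp b hg).fderiv

/-- The full cost function on the product space. -/
def Cfun {n : ℕ} (c : (Fin n → ℝ) → (Fin n → ℝ) → ℝ) :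
    (Fin n → ℝ) × (Fin n → ℝ) → ℝ := fun p => c p.1 p.2

/-- `G c i p = c_i(p)`, the `i`-th partial derivative in the first slot. -/
def Gfun {n : ℕ} (c : (Fin n → ℝ) → (Fin n → ℝ) → ℝ) (i : Fin n) :
    (Fin n → ℝ) × (Fin n → ℝ) → ℝ := fun p => fderiv ℝ (Cfun c) p (ee i, 0)

section Aux

variable {n : ℕ} {c : (Fin n → ℝ) → (Fin n → ℝ) → ℝ}
  (hc : ContDiff ℝ (⊤ : ℕ∞) (fun p : (Fin n → ℝ) × (Fin n → ℝ) => c p.1 p.2))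

include hc

lemma hCsm : ContDiff ℝ (⊤ : ℕ∞) (Cfun c) := hc

lemma hGsm (i : Fin n) : ContDiff ℝ (⊤ : ℕ∞) (Gfun c i) :=
  ((hCsm hc).fderiv_right (by simp)).clm_apply contDiff_const

lemma cI_eq (x z : Fin n → ℝ) (i : Fin n) : cI c x z i = Gfun c i (x, z) := by
  show fderiv ℝ (fun y => Cfun c (y, z)) x (ee i) = fderiv ℝ (Cfun c) (x, z) (ee i, 0)
  rw [slice_left ((hCsm hc).differentiable (by simp) (x, z))]
  rfl

end Aux

theorem stmt17 {n : ℕ}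
    (u : (Fin n → ℝ) → ℝ) (c : (Fin n → ℝ) → (Fin n → ℝ) → ℝ)
    (T : (Fin n → ℝ) → (Fin n → ℝ))
    (hu : ContDiff ℝ (⊤ : ℕ∞) u)
    (hc : ContDiff ℝ (⊤ : ℕ∞) (fun p : (Fin n → ℝ) × (Fin n → ℝ) => c p.1 p.2))
    (hT : ContDiff ℝ (⊤ : ℕ∞) T)
    -- `T` is the cost exponential of the potential `u`
    (contact : ∀ x i, pd i u x + cI c x (T x) i = 0)
    -- `u` is locally `c`-convex: `w` is positive definite
    (hw : ∀ x, (wMat u c T x).PosDef) :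
    -- the pullback of `h` along the graph embedding is `w` …
    (∀ x (v v' : Fin n → ℝ),
      hKM c (x, T x) (v, fderiv ℝ T x v) (v', fderiv ℝ T x v')
        = ∑ i, ∑ j, wMat u c T x i j * v i * v' j)
    ∧
    -- … in particular the graph is spacelike
    (∀ x (v : Fin n → ℝ), v ≠ 0 →
      0 < hKM c (x, T x) (v, fderiv ℝ T x v) (v, fderiv ℝ T x v)) := by
  classical
  have hGd : ∀ (i : Fin n) (p : (Fin n → ℝ) × (Fin n → ℝ)),
      DifferentiableAt ℝ (Gfun c i) p :=
    fun i p => ((hGsm hc i).differentiable (by simp)) p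
  have main : ∀ x (v v' : Fin n → ℝ),
      hKM c (x, T x) (v, fderiv ℝ T x v) (v', fderiv ℝ T x v')
        = ∑ i, ∑ j, wMat u c T x i j * v i * v' j := by
    intro x v v'
    set z := T x with hz
    set L := fderiv ℝ T x with hL
    set Φ : Fin n → ((Fin n → ℝ) × (Fin n → ℝ)) →L[ℝ] ℝ :=
      fun i => fderiv ℝ (Gfun c i) (x, z) with hΦ
    -- (a) b in terms of Φ
    have hb : ∀ i s, bMat c x z i s = -(Φ i (0, ee s)) := by
      intro i s
      show -(fderiv ℝ (fun ybar => cI c x ybar i) z (ee s)) = -(Φ i (0, ee s))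
      have e : (fun ybar => cI c x ybar i) = fun ybar => Gfun c i (x, ybar) := by
        funext ybar; exact cI_eq hc x ybar i
      rw [e, slice_right (hGd i (x, z))]
      rfl
    -- (b) mixed term of w in terms of Φ
    have hw2 : ∀ i j, pd j (fun y => cI c y z i) x = Φ i (ee j, 0) := by
      intro i j
      show fderiv ℝ (fun y => cI c y z i) x (ee j) = Φ i (ee j, 0)
      have e : (fun y => cI c y z i) = fun y => Gfun c i (y, z) := by
        funext y; exact cI_eq hc y z i
      rw [e, slice_left (hGd i (x, z))]
      rfl
    -- (c) derivative of the contact identity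
    have hu2 : ∀ i j, pd j (fun y => pd i u y) x = -(Φ i (ee j, L (ee j))) := by
      intro i j
      have heq : (fun y => pd i u y) = fun y => -(Gfun c i (y, T y)) := by
        funext y
        have h1 := contact y i
        rw [cI_eq hc y (T y) i] at h1
        linarith
      have hT' : HasFDerivAt T L x := by
        rw [hL]; exact (hT.differentiable (by simp) x).hasFDerivAt
      have hgraph : HasFDerivAt (fun y => Gfun c i (y, T y))
          ((Φ i).comp ((ContinuousLinearMap.id ℝ (Fin n → ℝ)).prod L)) x := by
        have h2 : HasFDerivAt (Gfun c i) (Φ i) (x, T x) := by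
          rw [hΦ]; exact (hGd i (x, z)).hasFDerivAt
        exact h2.comp x ((hasFDerivAt_id x).prodMk hT')
      show fderiv ℝ (fun y => pd i u y) x (ee j) = -(Φ i (ee j, L (ee j)))
      rw [heq, fderiv_fun_neg, hgraph.fderiv]
      rfl
    -- (d) w in terms of Φ
    have hwΦ : ∀ i j, wMat u c T x i j = -(Φ i (0, L (ee j))) := by
      intro i j
      show pd j (fun y => pd i u y) x + pd j (fun y => cI c y (T x) i) x = _
      rw [hu2 i j, hw2 i j]
      have e : (ee j, L (ee j)) = ((ee j, 0) : (Fin n → ℝ) × (Fin n → ℝ))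
          + ((0 : Fin n → ℝ), L (ee j)) := by simp
      rw [e, map_add]
      ring
    -- (e) key summation identity
    have key : ∀ i (q : Fin n → ℝ), (∑ s, bMat c x z i s * L q s)
        = ∑ j, wMat u c T x i j * q j := by
      intro i q
      set Ψ : (Fin n → ℝ) →L[ℝ] ℝ :=
        ((Φ i).comp (ContinuousLinearMap.inr ℝ (Fin n → ℝ) (Fin n → ℝ))).comp L with hΨ
      have h2 : (∑ s, bMat c x z i s * L q s) = -(Ψ q) := by
        rw [show Ψ q = ((Φ i).comp (ContinuousLinearMap.inr ℝ (Fin n → ℝ) (Fin n → ℝ))) (L q)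
            from rfl,
          clm_sum_eval, ← Finset.sum_neg_distrib]
        refine Finset.sum_congr rfl fun s _ => ?_
        rw [hb i s]
        show -(Φ i (0, ee s)) * L q s = -(L q s * Φ i (0, ee s))
        ring
      have h3 : Ψ q = ∑ j, q j * Ψ (ee j) := clm_sum_eval Ψ q
      rw [h2, h3, ← Finset.sum_neg_distrib]
      refine Finset.sum_congr rfl fun j _ => ?_
      have e : Ψ (ee j) = Φ i (0, L (ee j)) := rfl
      rw [e, hwΦ i j]; ring
    -- (f) symmetry of w
    have wsym : ∀ i j, wMat u c T x i j = wMat u c T x j i := by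
      intro i j
      have hcz : ContDiff ℝ (⊤ : ℕ∞) (fun y : Fin n → ℝ => c y z) :=
        hc.comp (contDiff_id.prodMk contDiff_const)
      show pd j (fun y => pd i u y) x + pd j (fun y => cI c y (T x) i) x
        = pd i (fun y => pd j u y) x + pd i (fun y => cI c y (T x) j) x
      have e1 : (fun y => cI c y (T x) i) = fun y => pd i (fun y' => c y' z) y := rfl
      have e2 : (fun y => cI c y (T x) j) = fun y => pd j (fun y' => c y' z) y := rfl
      rw [e1, e2, pd_comm hu x i j, pd_comm hcz x i j]
    -- assemble
    show (1 / 2) * ∑ i, ∑ s, bMat c x z i s * (v i * L v' s + v' i * L v s) = _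
    have expand : ∀ (a b : Fin n → ℝ),
        (∑ i, ∑ s, bMat c x z i s * (a i * L b s))
          = ∑ i, ∑ j, wMat u c T x i j * a i * b j := by
      intro a b
      refine Finset.sum_congr rfl fun i _ => ?_
      have h4 : (∑ s, bMat c x z i s * (a i * L b s))
          = a i * ∑ s, bMat c x z i s * L b s := by
        rw [Finset.mul_sum]
        exact Finset.sum_congr rfl fun s _ => by ring
      rw [h4, key i b, Finset.mul_sum]
      exact Finset.sum_congr rfl fun j _ => by ring
    have split : (∑ i, ∑ s, bMat c x z i s * (v i * L v' s + v' i * L v s))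
        = (∑ i, ∑ s, bMat c x z i s * (v i * L v' s))
          + ∑ i, ∑ s, bMat c x z i s * (v' i * L v s) := by
      rw [← Finset.sum_add_distrib]
      refine Finset.sum_congr rfl fun i _ => ?_
      rw [← Finset.sum_add_distrib]
      exact Finset.sum_congr rfl fun s _ => by ring
    rw [split, expand v v', expand v' v]
    have swap : (∑ i, ∑ j, wMat u c T x i j * v' i * v j)
        = ∑ i, ∑ j, wMat u c T x i j * v i * v' j := by
      rw [Finset.sum_comm]
      refine Finset.sum_congr rfl fun i _ => Finset.sum_congr rfl fun j _ => ?_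
      rw [wsym j i]; ring
    rw [swap]; ring
  refine ⟨main, fun x v hv => ?_⟩
  rw [main x v v]
  have hpos := (hw x).dotProduct_mulVec_pos hv
  have hre : dotProduct (star v) (Matrix.mulVec (wMat u c T x) v)
      = ∑ i, ∑ j, wMat u c T x i j * v i * v j := by
    simp only [star_trivial, dotProduct, Matrix.mulVec, Finset.mul_sum]
    exact Finset.sum_congr rfl fun i _ => Finset.sum_congr rfl fun j _ => by ring
  rw [hre] at hpos
  exact hpos
end
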